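/- Let (T,η,μ) be a monad and F an endofunctor on a category C, and let λ: TF → FT be an Eilenberg–Moore distributive law, i.e. a natural transformation with λ∘ηF = Fη and λ∘μF = Fμ∘λT∘Tλ. Define λⁿ: TFⁿ → FⁿT by λ⁰ = id and λ^{n+1} = Fⁿλ ∘ λⁿF. Then for every n and every object X, the diagram FTTFⁿT ⇉ FTFⁿT → F^{n+1}T at X, with parallel maps FT(Fⁿμ∘λⁿT) and FμFⁿT and cocone F^{n+1}μ∘FλⁿT, is a split coequalizer in C, with splittings s = FηFⁿT: F^{n+1}T → FTFⁿT and t = FηTFⁿT: FTFⁿT → FTTFⁿT (these splittings are mere morphisms of C, not T-algebra maps). Consequently, when C = Set, the graded monad with M_n = FⁿT, unit η and multiplications μ^{nk} = F^{n+k}μ∘FⁿλᵏT is depth-1, the diagrams above being coequalizers of U-split pairs and hence coequalizers in the Eilenberg–Moore category of T-algebras by Beck's theorem. -/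
import Mathlib


open CategoryTheory CategoryTheory.Limits

universe v u

variable {C : Type u} [Category.{v} C]

/-- Iterated application of an endofunctor: `pow F n = Fⁿ` (with `F^{n+1} = Fⁿ ∘ F`). -/
def pow (F : C ⥤ C) : ℕ → C ⥤ C
  | 0 => 𝟭 C
  | n + 1 => F ⋙ pow F n

/-- The iterated Eilenberg-Moore distributive law `λⁿ : TFⁿ → FⁿT`, with `λ⁰ = id`
and `λ^{n+1} = Fⁿλ ∘ λⁿF`. -/
def emLamPow (T : CategoryTheory.Monad C) (F : C ⥤ C)
    (l : ∀ X : C, T.obj (F.obj X) ⟶ F.obj (T.obj X)) :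
    ∀ (n : ℕ) (X : C), T.obj ((pow F n).obj X) ⟶ (pow F n).obj (T.obj X)
  | 0, X => 𝟙 (T.obj X)
  | n + 1, X => emLamPow T F l n (F.obj X) ≫ (pow F n).map (l X)

section Helpers

variable (T : CategoryTheory.Monad C) (F : C ⥤ C)
    (l : ∀ X : C, T.obj (F.obj X) ⟶ F.obj (T.obj X))

lemma emLamPow_nat
    (l_nat : ∀ {X Y : C} (f : X ⟶ Y), T.map (F.map f) ≫ l Y = l X ≫ F.map (T.map f)) :
    ∀ (n : ℕ) {X Y : C} (f : X ⟶ Y),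
      T.map ((pow F n).map f) ≫ emLamPow T F l n Y
        = emLamPow T F l n X ≫ (pow F n).map (T.map f)
  | 0, X, Y, f => by
      show T.map f ≫ 𝟙 (T.obj Y) = 𝟙 (T.obj X) ≫ T.map f
      simp
  | n + 1, X, Y, f => by
      show T.map ((pow F n).map (F.map f)) ≫ emLamPow T F l n (F.obj Y) ≫ (pow F n).map (l Y)
          = (emLamPow T F l n (F.obj X) ≫ (pow F n).map (l X)) ≫ (pow F n).map (F.map (T.map f))
      rw [← Category.assoc, emLamPow_nat l_nat n (F.map f), Category.assoc,
        ← (pow F n).map_comp, l_nat f, (pow F n).map_comp, ← Category.assoc]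

lemma emLamPow_unit
    (l_unit : ∀ X : C, T.η.app (F.obj X) ≫ l X = F.map (T.η.app X)) :
    ∀ (n : ℕ) (X : C),
      T.η.app ((pow F n).obj X) ≫ emLamPow T F l n X = (pow F n).map (T.η.app X)
  | 0, X => by simp [emLamPow, pow]
  | n + 1, X => by
      show T.η.app ((pow F n).obj (F.obj X)) ≫ emLamPow T F l n (F.obj X) ≫ (pow F n).map (l X)
          = (pow F n).map (F.map (T.η.app X))
      rw [← Category.assoc, emLamPow_unit l_unit n (F.obj X), ← (pow F n).map_comp, l_unit X]

lemma emLamPow_mult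
    (l_nat : ∀ {X Y : C} (f : X ⟶ Y), T.map (F.map f) ≫ l Y = l X ≫ F.map (T.map f))
    (l_mult : ∀ X : C,
      T.μ.app (F.obj X) ≫ l X = T.map (l X) ≫ l (T.obj X) ≫ F.map (T.μ.app X)) :
    ∀ (n : ℕ) (X : C),
      T.μ.app ((pow F n).obj X) ≫ emLamPow T F l n X
        = T.map (emLamPow T F l n X) ≫ emLamPow T F l n (T.obj X)
            ≫ (pow F n).map (T.μ.app X)
  | 0, X => by simp [emLamPow, pow]
  | n + 1, X => by
      show T.μ.app ((pow F n).obj (F.obj X)) ≫ emLamPow T F l n (F.obj X) ≫ (pow F n).map (l X)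
          = T.map (emLamPow T F l n (F.obj X) ≫ (pow F n).map (l X))
            ≫ (emLamPow T F l n (F.obj (T.obj X)) ≫ (pow F n).map (l (T.obj X)))
            ≫ (pow F n).map (F.map (T.μ.app X))
      rw [← Category.assoc, emLamPow_mult l_nat l_mult n (F.obj X)]
      rw [Category.assoc, Category.assoc, ← (pow F n).map_comp, l_mult X]
      rw [(pow F n).map_comp, (pow F n).map_comp]
      -- now move `(pow F n).map (T.map (l X))` past `emLamPow n`
      have h := emLamPow_nat T F l l_nat n (l X)
      simp only [T.map_comp, Category.assoc]
      slice_lhs 2 3 => rw [← h]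
      simp [Category.assoc]

/-- `μ0n` is unital. -/
lemma mu0n_unit
    (l_unit : ∀ X : C, T.η.app (F.obj X) ≫ l X = F.map (T.η.app X)) (n : ℕ) (X : C) :
    T.η.app ((pow F n).obj (T.obj X))
        ≫ (emLamPow T F l n (T.obj X) ≫ (pow F n).map (T.μ.app X))
      = 𝟙 _ := by
  rw [← Category.assoc, emLamPow_unit T F l l_unit n (T.obj X), ← (pow F n).map_comp]
  simp

/-- `μ0n` is an action: associativity. -/
lemma mu0n_assoc
    (l_nat : ∀ {X Y : C} (f : X ⟶ Y), T.map (F.map f) ≫ l Y = l X ≫ F.map (T.map f))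
    (l_mult : ∀ X : C,
      T.μ.app (F.obj X) ≫ l X = T.map (l X) ≫ l (T.obj X) ≫ F.map (T.μ.app X))
    (n : ℕ) (X : C) :
    T.map (emLamPow T F l n (T.obj X) ≫ (pow F n).map (T.μ.app X))
        ≫ (emLamPow T F l n (T.obj X) ≫ (pow F n).map (T.μ.app X))
      = T.μ.app ((pow F n).obj (T.obj X))
        ≫ (emLamPow T F l n (T.obj X) ≫ (pow F n).map (T.μ.app X)) := by
  have hnat := emLamPow_nat T F l l_nat n (T.μ.app X)
  have hmult := emLamPow_mult T F l l_nat l_mult n (T.obj X)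
  rw [T.map_comp, Category.assoc, ← Category.assoc (T.map ((pow F n).map (T.μ.app X))), hnat]
  conv_rhs => rw [← Category.assoc, hmult]
  simp only [Functor.comp_obj, Category.assoc, ← (pow F n).map_comp]
  congr 2
  simp [Monad.assoc]

end Helpers

/-- Given a monad `T`, an endofunctor `F` and an Eilenberg-Moore distributive law
`λ : TF → FT`, for every `n` and `X` the diagram `FTTFⁿT ⇉ FTFⁿT → F^{n+1}T` at `X`
(parallel maps `FT(Fⁿμ ∘ λⁿT)` and `FμFⁿT`, cocone `F^{n+1}μ ∘ FλⁿT = F(Fⁿμ ∘ λⁿT)`)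
is a split coequalizer in `C`, with splittings `s = FηFⁿT` and `t = FηTFⁿT` (mere
morphisms of `C`); consequently, the diagrams being coequalizers of `U`-split pairs,
for any lift of the fork to the Eilenberg-Moore category of `T` (i.e. for any
`T`-algebra structures on the three objects making the three maps `T`-algebra
morphisms) the lifted fork is a coequalizer of `T`-algebras, i.e. the graded monad
`Mₙ = FⁿT` is depth-1. -/
theorem em_law_graded_monad_depth1 (T : CategoryTheory.Monad C) (F : C ⥤ C)
    (l : ∀ X : C, T.obj (F.obj X) ⟶ F.obj (T.obj X))
    (l_nat : ∀ {X Y : C} (f : X ⟶ Y), T.map (F.map f) ≫ l Y = l X ≫ F.map (T.map f))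
    (l_unit : ∀ X : C, T.η.app (F.obj X) ≫ l X = F.map (T.η.app X))
    (l_mult : ∀ X : C,
      T.μ.app (F.obj X) ≫ l X = T.map (l X) ≫ l (T.obj X) ≫ F.map (T.μ.app X))
    (n : ℕ) (X : C) :
    -- notation: `Z = FⁿTX`, `μ0n = Fⁿμ ∘ λⁿT : TFⁿT → FⁿT` at `X`
    ∀ (Z : C) (hZ : Z = (pow F n).obj (T.obj X))
      (μ0n : T.obj ((pow F n).obj (T.obj X)) ⟶ (pow F n).obj (T.obj X))
      (hμ : μ0n = emLamPow T F l n (T.obj X) ≫ (pow F n).map (T.μ.app X)),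
      -- the four split coequalizer equations
      (F.map (T.map μ0n) ≫ F.map μ0n
          = F.map (T.μ.app ((pow F n).obj (T.obj X))) ≫ F.map μ0n) ∧
      (F.map (T.η.app ((pow F n).obj (T.obj X))) ≫ F.map μ0n
          = 𝟙 (F.obj ((pow F n).obj (T.obj X)))) ∧
      (F.map (T.η.app (T.obj ((pow F n).obj (T.obj X))))
            ≫ F.map (T.μ.app ((pow F n).obj (T.obj X)))
          = 𝟙 (F.obj (T.obj ((pow F n).obj (T.obj X))))) ∧
      (F.map (T.η.app (T.obj ((pow F n).obj (T.obj X)))) ≫ F.map (T.map μ0n)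
          = F.map μ0n ≫ F.map (T.η.app ((pow F n).obj (T.obj X)))) ∧
      -- the split coequalizer in `C`, with the above splittings
      (∃ sc : IsSplitCoequalizer
          (F.map (T.map μ0n))
          (F.map (T.μ.app ((pow F n).obj (T.obj X))))
          (F.map μ0n),
        sc.rightSection = F.map (T.η.app ((pow F n).obj (T.obj X))) ∧
        sc.leftSection = F.map (T.η.app (T.obj ((pow F n).obj (T.obj X))))) ∧
      -- consequently: any lift of the fork to the Eilenberg-Moore category of
      -- `T`-algebras is a coequalizer there
      (∀ (aA : T.obj (F.obj (T.obj (T.obj ((pow F n).obj (T.obj X)))))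
              ⟶ F.obj (T.obj (T.obj ((pow F n).obj (T.obj X)))))
        (uA : T.η.app _ ≫ aA = 𝟙 _) (mA : T.μ.app _ ≫ aA = T.map aA ≫ aA)
        (aB : T.obj (F.obj (T.obj ((pow F n).obj (T.obj X))))
              ⟶ F.obj (T.obj ((pow F n).obj (T.obj X))))
        (uB : T.η.app _ ≫ aB = 𝟙 _) (mB : T.μ.app _ ≫ aB = T.map aB ≫ aB)
        (aC : T.obj (F.obj ((pow F n).obj (T.obj X))) ⟶ F.obj ((pow F n).obj (T.obj X)))
        (uC : T.η.app _ ≫ aC = 𝟙 _) (mC : T.μ.app _ ≫ aC = T.map aC ≫ aC)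
        (fH gH : (⟨_, aA, uA, mA⟩ : CategoryTheory.Monad.Algebra T)
                  ⟶ (⟨_, aB, uB, mB⟩ : CategoryTheory.Monad.Algebra T))
        (cH : (⟨_, aB, uB, mB⟩ : CategoryTheory.Monad.Algebra T)
                  ⟶ (⟨_, aC, uC, mC⟩ : CategoryTheory.Monad.Algebra T)),
        fH.f = F.map (T.map μ0n) →
        gH.f = F.map (T.μ.app ((pow F n).obj (T.obj X))) →
        cH.f = F.map μ0n →
        ∃ w : fH ≫ cH = gH ≫ cH,
          Nonempty (IsColimit (Cofork.ofπ cH w))) := by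
  intro Z hZ μ0n hμ
  -- basic action equations for μ0n
  have hunit : T.η.app ((pow F n).obj (T.obj X)) ≫ μ0n = 𝟙 _ := by
    rw [hμ]; exact mu0n_unit T F l l_unit n X
  have hassoc : T.map μ0n ≫ μ0n = T.μ.app ((pow F n).obj (T.obj X)) ≫ μ0n := by
    rw [hμ]; exact mu0n_assoc T F l l_nat l_mult n X
  have eq1 : F.map (T.map μ0n) ≫ F.map μ0n
      = F.map (T.μ.app ((pow F n).obj (T.obj X))) ≫ F.map μ0n := by
    rw [← F.map_comp, ← F.map_comp, hassoc]
  have eq2 : F.map (T.η.app ((pow F n).obj (T.obj X))) ≫ F.map μ0n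
      = 𝟙 (F.obj ((pow F n).obj (T.obj X))) := by
    rw [← F.map_comp, hunit, F.map_id]
    rfl
  have eq3 : F.map (T.η.app (T.obj ((pow F n).obj (T.obj X))))
        ≫ F.map (T.μ.app ((pow F n).obj (T.obj X)))
      = 𝟙 (F.obj (T.obj ((pow F n).obj (T.obj X)))) := by
    rw [← F.map_comp]
    simp
  have eq4 : F.map (T.η.app (T.obj ((pow F n).obj (T.obj X)))) ≫ F.map (T.map μ0n)
      = F.map μ0n ≫ F.map (T.η.app ((pow F n).obj (T.obj X))) := by
    rw [← F.map_comp, ← F.map_comp]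
    exact congrArg F.map (T.η.naturality μ0n).symm
  refine ⟨eq1, eq2, eq3, eq4, ?_, ?_⟩
  · exact ⟨{ rightSection := F.map (T.η.app ((pow F n).obj (T.obj X)))
             leftSection := F.map (T.η.app (T.obj ((pow F n).obj (T.obj X))))
             condition := eq1
             rightSection_π := eq2
             leftSection_bottom := eq3
             leftSection_top := eq4 }, rfl, rfl⟩
  · intro aA uA mA aB uB mB aC uC mC fH gH cH hf hg hc
    have hfH : T.map fH.f ≫ aB = aA ≫ fH.f := fH.h
    have hgH : T.map gH.f ≫ aB = aA ≫ gH.f := gH.h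
    have hcH : T.map cH.f ≫ aC = aB ≫ cH.f := cH.h
    have hcH' : T.map (F.map μ0n) ≫ aC = aB ≫ F.map μ0n := by rw [← hc]; exact hcH
    have w : fH ≫ cH = gH ≫ cH := by
      apply Monad.Algebra.Hom.ext
      show fH.f ≫ cH.f = gH.f ≫ cH.f
      rw [hf, hg, hc]; exact eq1
    have hsplit : T.map (F.map (T.η.app ((pow F n).obj (T.obj X))))
        ≫ T.map (F.map μ0n) = 𝟙 (T.obj (F.obj ((pow F n).obj (T.obj X)))) := by
      rw [← T.toFunctor.map_comp, eq2]
      exact T.toFunctor.map_id _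
    haveI : IsSplitEpi (T.map (F.map μ0n)) :=
      IsSplitEpi.mk' ⟨T.map (F.map (T.η.app ((pow F n).obj (T.obj X)))), hsplit⟩
    refine ⟨w, ⟨Cofork.IsColimit.mk (Cofork.ofπ cH w) (fun s => ?_) (fun s => ?_)
      (fun s m hm => ?_)⟩⟩
    · -- desc
      have hπ : T.map s.π.f ≫ s.pt.a = aB ≫ s.π.f := s.π.h
      have hcond : fH.f ≫ s.π.f = gH.f ≫ s.π.f := by
        have := congrArg Monad.Algebra.Hom.f s.condition
        simpa using this
      refine { f := F.map (T.η.app ((pow F n).obj (T.obj X))) ≫ s.π.f, h := ?_ }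
      show T.map (F.map (T.η.app ((pow F n).obj (T.obj X))) ≫ s.π.f) ≫ s.pt.a
          = aC ≫ F.map (T.η.app ((pow F n).obj (T.obj X))) ≫ s.π.f
      rw [← cancel_epi (T.map (F.map μ0n))]
      have hL : T.map (F.map μ0n)
            ≫ T.map (F.map (T.η.app ((pow F n).obj (T.obj X))) ≫ s.π.f) ≫ s.pt.a
          = aB ≫ s.π.f := by
        simp only [Functor.map_comp, Category.assoc]
        rw [hπ]
        slice_lhs 1 2 => rw [← Functor.map_comp, ← eq4, Functor.map_comp]
        rw [← hf]
        slice_lhs 2 3 => rw [hfH]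
        simp only [Category.assoc]
        rw [hcond]
        slice_lhs 2 3 => rw [← hgH]
        rw [hg]
        slice_lhs 1 2 => rw [← T.toFunctor.map_comp, eq3, T.toFunctor.map_id]
        simp
      have hR : T.map (F.map μ0n)
            ≫ aC ≫ F.map (T.η.app ((pow F n).obj (T.obj X))) ≫ s.π.f
          = aB ≫ s.π.f := by
        slice_lhs 1 2 => rw [hcH']
        slice_lhs 2 3 => rw [← eq4]
        simp only [Category.assoc]
        rw [← hf, hcond, hg]
        slice_lhs 2 3 => rw [eq3]
        simp
      exact hL.trans hR.symm
    · -- fac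
      apply Monad.Algebra.Hom.ext
      have hcond : fH.f ≫ s.π.f = gH.f ≫ s.π.f := by
        have := congrArg Monad.Algebra.Hom.f s.condition
        simpa using this
      show cH.f ≫ (F.map (T.η.app ((pow F n).obj (T.obj X))) ≫ s.π.f) = s.π.f
      rw [hc]
      calc F.map μ0n ≫ F.map (T.η.app ((pow F n).obj (T.obj X))) ≫ s.π.f
          = (F.map μ0n ≫ F.map (T.η.app ((pow F n).obj (T.obj X)))) ≫ s.π.f := by
            simp [Category.assoc]
        _ = (F.map (T.η.app (T.obj ((pow F n).obj (T.obj X)))) ≫ fH.f) ≫ s.π.f := by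
            rw [← eq4, hf]
        _ = F.map (T.η.app (T.obj ((pow F n).obj (T.obj X)))) ≫ gH.f ≫ s.π.f := by
            rw [Category.assoc, hcond]
        _ = s.π.f := by rw [hg, ← Category.assoc, eq3]; exact Category.id_comp _
    · -- uniq
      apply Monad.Algebra.Hom.ext
      have hm' : cH.f ≫ m.f = s.π.f := by
        have := congrArg Monad.Algebra.Hom.f hm
        simpa using this
      show m.f = F.map (T.η.app ((pow F n).obj (T.obj X))) ≫ s.π.f
      rw [← hm', ← Category.assoc, hc, eq2]
      exact (Category.id_comp _).symm
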